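/- (Normal operator as an integral against a kernel supported on the light cone) Let κ ∈ C_c(ℝ × ℝ³ × 𝕊²) and f ∈ C_c(ℝ⁴). Then L_κ*L_κ f(t,x) = ∫_{ℝ³} [κ(t,x, ω_{xy}) κ(t+|y−x|, y, ω_{xy}) f(t+|y−x|, y) + κ(t,x, −ω_{xy}) κ(t−|y−x|, y, −ω_{xy}) f(t−|y−x|, y)] |y−x|^{−2} dy, where ω_{xy} = (y−x)/|y−x|. -/

import Mathlib

noncomputable section
open MeasureTheory

abbrev E3 := EuclideanSpace ℝ (Fin 3)
abbrev Sph := Metric.sphere (0 : E3) 1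

/-- The surface measure on the unit sphere `𝕊² ⊂ ℝ³`. -/
def sphereMeasure : Measure Sph := (volume : Measure E3).toSphere

/-- The weighted light ray transform `L_κ f(x,θ) = ∫_ℝ κ(s, x+sθ, θ) f(s, x+sθ) ds`
(the direction argument of the weight `κ` is taken in `ℝ³`). -/
def weightedLightRay (κ : (ℝ × E3) × E3 → ℝ) (f : ℝ × E3 → ℝ) (x θ : E3) : ℝ :=
  ∫ s : ℝ, κ ((s, x + s • θ), θ) * f (s, x + s • θ)

/-- The adjoint `L_κ* g(s,y) = ∫_{𝕊²} κ(s,y,θ) g(y−sθ, θ) dθ`. -/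
def weightedLightRayAdj (κ : (ℝ × E3) × E3 → ℝ) (g : E3 → E3 → ℝ) (s : ℝ) (y : E3) : ℝ :=
  ∫ θ : Sph, κ ((s, y), (θ : E3)) * g (y - s • (θ : E3)) (θ : E3) ∂sphereMeasure

/-!
Substituting `s = t + u` in the light ray transform,
`L_κ*L_κ f(t,x) = ∫_{𝕊²} ∫_ℝ h(θ,u) du dθ` with `h(θ,u) = κ(t,x,θ) κ(t+u, x+uθ, θ) f(t+u, x+uθ)`.
Split the line into `u = r > 0` and `u = -r < 0`. In polar coordinates `y - x = rθ` the
Jacobian `dy = r² dr dθ` cancels the weight `|y-x|⁻²`; on the half `u < 0` the reflection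
`y - x ↦ x - y` replaces `θ` by `-θ`. Since `κ` and `f` are continuous and `f` has compact
support, `h` is bounded with bounded support in `u`, which is all Fubini needs.
-/

open Set Metric Function

theorem smul_coe_homeomorphUnitSphereProd {E : Type*} [NormedAddCommGroup E] [NormedSpace ℝ E]
    (v : ({0}ᶜ : Set E)) :
    ((homeomorphUnitSphereProd E v).2 : ℝ) • ((homeomorphUnitSphereProd E v).1 : E) = v := by
  simp [smul_inv_smul₀ (norm_ne_zero_iff.2 v.2)]

theorem inv_norm_pow_smul_apply_coe_smul_coe_sphere {E F : Type*} [NormedAddCommGroup E]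
    [NormedSpace ℝ E] [NormedAddCommGroup F] [NormedSpace ℝ F] (G : E → ℝ → F) (k : ℕ)
    (θ : sphere (0 : E) 1) (r : Ioi (0 : ℝ)) :
    (‖(r : ℝ) • (θ : E)‖ ^ k)⁻¹ • G (‖(r : ℝ) • (θ : E)‖⁻¹ • (r : ℝ) • (θ : E)) ‖(r : ℝ) • (θ : E)‖
      = ((r : ℝ) ^ k)⁻¹ • G θ r := by
  have hr : ‖(r : ℝ) • (θ : E)‖ = r := by simp [norm_smul, abs_of_pos r.2.out]
  rw [hr, inv_smul_smul₀ (ne_of_gt r.2)]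

section Ray

variable {F : Type*} [NormedAddCommGroup F] [NormedSpace ℝ F]

theorem MeasureTheory.Measure.integral_volumeIoiPow (n : ℕ) (H : ℝ → F) :
    ∫ r, H r ∂(Measure.volumeIoiPow n) = ∫ r in Ioi 0, r ^ n • H r := by
  simp only [Measure.volumeIoiPow, ENNReal.ofReal]
  rw [integral_withDensity_eq_integral_smul (measurable_subtype_coe.pow_const n).real_toNNReal,
    integral_subtype_comap measurableSet_Ioi fun r => (r ^ n).toNNReal • H r]
  refine setIntegral_congr_fun measurableSet_Ioi fun r (hr : 0 < r) => ?_
  rw [NNReal.smul_def, Real.coe_toNNReal _ (pow_nonneg hr.le n)]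

instance : SigmaFinite (volume.comap (Subtype.val : Ioi (0 : ℝ) → ℝ)) := by
  have : IsFiniteMeasureOnCompacts (volume.comap (Subtype.val : Ioi (0 : ℝ) → ℝ)) :=
    .comap' _ continuous_subtype_val (.subtype_coe measurableSet_Ioi)
  have : LocallyCompactSpace (Ioi (0 : ℝ)) := isOpen_Ioi.locallyCompactSpace
  infer_instance

theorem integrable_prod_volumeIoiPow_of_continuous {X : Type*} [TopologicalSpace X] [T2Space X]
    [CompactSpace X] [SecondCountableTopology X] [MeasurableSpace X] [OpensMeasurableSpace X]
    (ν : Measure X) [IsFiniteMeasure ν] (k : ℕ) {G : X → ℝ → F} (hG : Continuous (uncurry G))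
    {R : ℝ} (hR : ∀ θ r, R ≤ r → G θ r = 0) :
    Integrable (fun p : X × Ioi (0 : ℝ) => ((p.2 : ℝ) ^ k)⁻¹ • G p.1 p.2)
      (ν.prod (.volumeIoiPow k)) := by
  rw [Measure.volumeIoiPow, prod_withDensity_right (by fun_prop),
    integrable_withDensity_iff_integrable_smul' (by fun_prop) (by simp)]
  have hcancel : (fun p : X × Ioi (0 : ℝ) =>
      (ENNReal.ofReal ((p.2 : ℝ) ^ k)).toReal • ((p.2 : ℝ) ^ k)⁻¹ • G p.1 p.2) =
      uncurry G ∘ Prod.map id Subtype.val := by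
    ext ⟨θ, r, hr : 0 < r⟩
    simp [smul_smul, ENNReal.toReal_ofReal (pow_nonneg hr.le k), (pow_pos hr k).ne']
  have hmp : MeasurePreserving (Prod.map id Subtype.val)
      (ν.prod (volume.comap (Subtype.val : Ioi (0 : ℝ) → ℝ))) (ν.prod (volume.restrict (Ioi 0))) :=
    (MeasurePreserving.id ν).prod
      ⟨measurable_subtype_coe, map_comap_subtype_coe measurableSet_Ioi _⟩
  rw [hcancel, hmp.integrable_comp_emb
      (MeasurableEmbedding.id.prodMap (.subtype_coe measurableSet_Ioi)),
    ← Measure.restrict_univ (μ := ν), Measure.prod_restrict]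
  have hcompact : IsCompact (univ ×ˢ Icc 0 R : Set (X × ℝ)) := isCompact_univ.prod isCompact_Icc
  refine (hG.continuousOn.integrableOn_compact hcompact).of_forall_sdiff_eq_zero
    (MeasurableSet.univ.prod measurableSet_Ioi) ?_
  rintro ⟨θ, r⟩ ⟨⟨-, hr0 : 0 < r⟩, hnot⟩
  exact hR θ r (by_contra fun h => hnot ⟨trivial, hr0.le, (not_le.1 h).le⟩)

theorem integral_eq_integral_Ioi_add_comp_neg {g : ℝ → F} (hg : Integrable g) :
    ∫ u, g u = ∫ r in Ioi 0, (g r + g (-r)) := by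
  rw [integral_add hg.integrableOn hg.comp_neg.integrableOn, integral_comp_neg_Ioi, neg_zero,
    add_comm, intervalIntegral.integral_Iic_add_Ioi hg.integrableOn hg.integrableOn]

end Ray

section Polar

variable {E F : Type*} [NormedAddCommGroup E] [NormedSpace ℝ E] [MeasurableSpace E] [BorelSpace E]
  [FiniteDimensional ℝ E] [Nontrivial E] [NormedAddCommGroup F]
  (μ : Measure E) [μ.IsAddHaarMeasure]

theorem integrable_iff_integrable_toSphere_prod (g : E → F) :
    Integrable g μ ↔ Integrable (fun p => g ((p.2 : ℝ) • (p.1 : E)))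
      (μ.toSphere.prod (.volumeIoiPow (Module.finrank ℝ E - 1))) := by
  rw [← μ.measurePreserving_homeomorphUnitSphereProd.integrable_comp_emb
      (Homeomorph.measurableEmbedding _), ← restrict_compl_singleton (μ := μ) 0, ← IntegrableOn,
    integrableOn_iff_comap_subtypeVal (measurableSet_singleton _).compl, restrict_compl_singleton]
  simp only [comp_def, smul_coe_homeomorphUnitSphereProd]

variable [NormedSpace ℝ F]

theorem integral_eq_integral_toSphere_prod (g : E → F) :
    ∫ v, g v ∂μ = ∫ p, g ((p.2 : ℝ) • (p.1 : E))
      ∂(μ.toSphere.prod (.volumeIoiPow (Module.finrank ℝ E - 1))) := by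
  rw [← μ.measurePreserving_homeomorphUnitSphereProd.integral_comp
    (Homeomorph.measurableEmbedding _)]
  simp only [smul_coe_homeomorphUnitSphereProd]
  rw [integral_subtype_comap (measurableSet_singleton _).compl, restrict_compl_singleton]

theorem integrable_inv_norm_pow_smul_of_continuous {G : E → ℝ → F} (hG : Continuous (uncurry G))
    {R : ℝ} (hR : ∀ θ r, R ≤ r → G θ r = 0) :
    Integrable (fun v => (‖v‖ ^ (Module.finrank ℝ E - 1))⁻¹ • G (‖v‖⁻¹ • v) ‖v‖) μ := by
  rw [integrable_iff_integrable_toSphere_prod]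
  simp only [inv_norm_pow_smul_apply_coe_smul_coe_sphere]
  exact integrable_prod_volumeIoiPow_of_continuous μ.toSphere _ (G := fun θ r => G θ r)
    (hG.comp (continuous_subtype_val.prodMap continuous_id)) fun θ r => hR θ r

theorem integral_inv_norm_pow_smul_eq_integral_toSphere {G : E → ℝ → F}
    (hG : Continuous (uncurry G)) {R : ℝ} (hR : ∀ θ r, R ≤ r → G θ r = 0) :
    ∫ v, (‖v‖ ^ (Module.finrank ℝ E - 1))⁻¹ • G (‖v‖⁻¹ • v) ‖v‖ ∂μ
      = ∫ θ : sphere (0 : E) 1, (∫ r in Ioi (0 : ℝ), G θ r) ∂μ.toSphere := by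
  rw [integral_eq_integral_toSphere_prod]
  simp only [inv_norm_pow_smul_apply_coe_smul_coe_sphere]
  rw [integral_prod _ (integrable_prod_volumeIoiPow_of_continuous μ.toSphere _
    (G := fun θ r => G θ r) (hG.comp (continuous_subtype_val.prodMap continuous_id))
    fun θ r => hR θ r)]
  refine integral_congr_ae (.of_forall fun θ => ?_)
  dsimp only
  rw [Measure.integral_volumeIoiPow _ fun r => (r ^ _)⁻¹ • G θ r]
  refine setIntegral_congr_fun measurableSet_Ioi fun r (hr : 0 < r) => ?_
  rw [smul_inv_smul₀ (pow_ne_zero _ hr.ne')]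

theorem integral_toSphere_integral_eq_integral_inv_norm_pow_smul {G : E → ℝ → F}
    (hG : Continuous (uncurry G)) {R : ℝ} (hR : ∀ θ u, R ≤ |u| → G θ u = 0) :
    ∫ θ : sphere (0 : E) 1, (∫ u, G θ u) ∂μ.toSphere
      = ∫ v, (‖v‖ ^ (Module.finrank ℝ E - 1))⁻¹ •
          (G (‖v‖⁻¹ • v) ‖v‖ + G (-(‖v‖⁻¹ • v)) (-‖v‖)) ∂μ := by
  have hG_neg : Continuous (uncurry fun θ r => G θ (-r)) :=
    hG.comp (continuous_fst.prodMk continuous_snd.neg)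
  have hR_pos : ∀ θ r, R ≤ r → G θ r = 0 := fun θ r h => hR θ r (h.trans (le_abs_self r))
  have hR_neg : ∀ θ r, R ≤ r → G θ (-r) = 0 := fun θ r h =>
    hR θ (-r) (by rw [abs_neg]; exact h.trans (le_abs_self r))
  have hline : ∀ θ, ∫ u, G θ u = ∫ r in Ioi 0, (G θ r + G θ (-r)) := fun θ =>
    integral_eq_integral_Ioi_add_comp_neg <|
      (hG.comp (continuous_const.prodMk continuous_id)).integrable_of_hasCompactSupport <|
        HasCompactSupport.intro (isCompact_closedBall 0 R) fun u hu => hR θ u <| by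
          rw [mem_closedBall, dist_zero_right, Real.norm_eq_abs, not_le] at hu
          exact hu.le
  have h_pos := integrable_inv_norm_pow_smul_of_continuous μ hG hR_pos
  have h_neg := integrable_inv_norm_pow_smul_of_continuous μ hG_neg hR_neg
  -- the half-line `u < 0` is carried to the directions `-θ` by the reflection `v ↦ -v`
  have h_flip : (fun v : E => (‖v‖ ^ (Module.finrank ℝ E - 1))⁻¹ • G (-(‖v‖⁻¹ • v)) (-‖v‖)) =
      fun v => (‖-v‖ ^ (Module.finrank ℝ E - 1))⁻¹ • G (‖-v‖⁻¹ • -v) (-‖-v‖) := by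
    simp only [norm_neg, smul_neg]
  simp_rw [hline, ← integral_inv_norm_pow_smul_eq_integral_toSphere μ
    (G := fun θ r => G θ r + G θ (-r)) (hG.add hG_neg)
    fun θ r h => by rw [hR_pos θ r h, hR_neg θ r h, add_zero], smul_add]
  rw [integral_add h_pos h_neg, integral_add h_pos (h_flip ▸ h_neg.comp_neg), h_flip,
    integral_neg_eq_self (fun v => (‖v‖ ^ (Module.finrank ℝ E - 1))⁻¹ • G (‖v‖⁻¹ • v) (-‖v‖))]

end Polar

def normalRayIntegrand (κ : (ℝ × E3) × E3 → ℝ) (f : ℝ × E3 → ℝ) (t : ℝ) (x θ : E3) (u : ℝ) :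
    ℝ :=
  κ ((t, x), θ) * κ ((t + u, x + u • θ), θ) * f (t + u, x + u • θ)

theorem weightedLightRayAdj_weightedLightRay (κ : (ℝ × E3) × E3 → ℝ) (f : ℝ × E3 → ℝ)
    (t : ℝ) (x : E3) :
    weightedLightRayAdj κ (fun x' θ => weightedLightRay κ f x' θ) t x
      = ∫ θ : Sph, (∫ u, normalRayIntegrand κ f t x θ u) ∂sphereMeasure := by
  refine integral_congr_ae (.of_forall fun θ => ?_)
  dsimp only [weightedLightRay]
  rw [← integral_const_mul, ← integral_add_left_eq_self _ t]
  congr with u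
  have hray : x - t • (θ : E3) + (t + u) • (θ : E3) = x + u • (θ : E3) := by
    rw [add_smul]; abel
  rw [hray, normalRayIntegrand, mul_assoc]

theorem continuous_normalRayIntegrand {κ : (ℝ × E3) × E3 → ℝ} {f : ℝ × E3 → ℝ}
    (hκ : Continuous κ) (hf : Continuous f) (t : ℝ) (x : E3) :
    Continuous (uncurry (normalRayIntegrand κ f t x)) := by
  unfold normalRayIntegrand uncurry
  fun_prop

theorem exists_normalRayIntegrand_eq_zero {f : ℝ × E3 → ℝ} (hf : HasCompactSupport f)
    (κ : (ℝ × E3) × E3 → ℝ) (t : ℝ) (x : E3) :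
    ∃ R, ∀ θ u, R ≤ |u| → normalRayIntegrand κ f t x θ u = 0 := by
  obtain ⟨R, -, hR⟩ := hf.exists_pos_le_norm
  refine ⟨R + |t|, fun θ u hu => ?_⟩
  have hfar : R ≤ ‖(t + u, x + u • θ)‖ :=
    calc R ≤ |u| - |t| := by linarith
      _ ≤ |t + u| := by simpa [add_comm] using abs_sub_abs_le_abs_add u t
      _ ≤ ‖(t + u, x + u • θ)‖ := norm_fst_le (t + u, x + u • θ)
  rw [normalRayIntegrand, hR _ hfar, mul_zero]

theorem weighted_lightRay_normal_kernel_general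
    (κ : (ℝ × E3) × E3 → ℝ) (hκc : Continuous κ)
    (f : ℝ × E3 → ℝ) (hfc : Continuous f) (hfsupp : HasCompactSupport f)
    (t : ℝ) (x : E3) :
    weightedLightRayAdj κ (fun x' θ => weightedLightRay κ f x' θ) t x
      = ∫ y : E3,
          (κ ((t, x), ‖y - x‖⁻¹ • (y - x))
              * κ ((t + ‖y - x‖, y), ‖y - x‖⁻¹ • (y - x)) * f (t + ‖y - x‖, y)
            + κ ((t, x), -(‖y - x‖⁻¹ • (y - x)))
              * κ ((t - ‖y - x‖, y), -(‖y - x‖⁻¹ • (y - x))) * f (t - ‖y - x‖, y))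
            * (‖y - x‖ ^ 2)⁻¹ := by
  obtain ⟨R, hR⟩ := exists_normalRayIntegrand_eq_zero hfsupp κ t x
  rw [weightedLightRayAdj_weightedLightRay, sphereMeasure,
    integral_toSphere_integral_eq_integral_inv_norm_pow_smul _
      (continuous_normalRayIntegrand hκc hfc t x) hR,
    finrank_euclideanSpace_fin, ← integral_sub_right_eq_self _ x]
  refine integral_congr_ae (.of_forall fun y => ?_)
  have hy : x + ‖y - x‖ • ‖y - x‖⁻¹ • (y - x) = y := by
    rcases eq_or_ne y x with rfl | hyx
    · simp
    · rw [smul_inv_smul₀ (norm_ne_zero_iff.2 (sub_ne_zero.2 hyx)), add_sub_cancel]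
  simp only [normalRayIntegrand, smul_eq_mul, neg_smul_neg, hy, ← sub_eq_add_neg]
  ring

/-- Normal operator as an integral against a kernel supported on the light
cone: for `κ ∈ C_c(ℝ × ℝ³ × 𝕊²)` and `f ∈ C_c(ℝ⁴)`, with `ω = (y−x)/|y−x|`,
`L_κ*L_κ f(t,x) = ∫_{ℝ³} [κ(t,x,ω) κ(t+|y−x|, y, ω) f(t+|y−x|, y)
  + κ(t,x,−ω) κ(t−|y−x|, y, −ω) f(t−|y−x|, y)] |y−x|^{−2} dy`. -/
theorem weighted_lightRay_normal_kernel
    (κ : (ℝ × E3) × E3 → ℝ) (hκc : Continuous κ)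
    (hκsupp : ∃ K : Set (ℝ × E3), IsCompact K ∧ ∀ p θ, p ∉ K → κ (p, θ) = 0)
    (f : ℝ × E3 → ℝ) (hfc : Continuous f) (hfsupp : HasCompactSupport f)
    (t : ℝ) (x : E3) :
    weightedLightRayAdj κ (fun x' θ => weightedLightRay κ f x' θ) t x
      = ∫ y : E3,
          (κ ((t, x), ‖y - x‖⁻¹ • (y - x))
              * κ ((t + ‖y - x‖, y), ‖y - x‖⁻¹ • (y - x)) * f (t + ‖y - x‖, y)
            + κ ((t, x), -(‖y - x‖⁻¹ • (y - x)))
              * κ ((t - ‖y - x‖, y), -(‖y - x‖⁻¹ • (y - x))) * f (t - ‖y - x‖, y))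
            * (‖y - x‖ ^ 2)⁻¹ :=
  weighted_lightRay_normal_kernel_general κ hκc f hfc hfsupp t x
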